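/- arXiv:2404.09541 — 4 statements merged into one kernel-verified Lean document; each statement's English description precedes it below -/
import Mathlib

section
/- Let T be a binary decision tree over ℝ^d with classes {1,…,c}, let x̃ ∈ ℝ^d, and let ε ≥ 0 be strictly smaller than the margin of x̃ at T. Then the function y ↦ eval(T, y) is constant on the closed ℓ∞-ball of radius ε centered at x̃: for every y with ‖y − x̃‖_∞ ≤ ε, eval(T, y) = eval(T, x̃). -/
open scoped Classical

/-- A binary decision tree over `ℝ^d` with classes `{1,…,c}` (encoded as `Fin c`):
either a leaf labeled by a class, or an internal node carrying a feature index,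
a threshold, and two subtrees. -/
inductive DTree (d c : ℕ) : Type where
  | leaf (k : Fin c) : DTree d c
  | node (j : Fin d) (t : ℝ) (L R : DTree d c) : DTree d c

namespace DTree

variable {d c : ℕ}

/-- Evaluation of a decision tree at a point `x : ℝ^d`. -/
noncomputable def eval : DTree d c → (Fin d → ℝ) → Fin c
  | leaf k, _ => k
  | node j t L R, x => if x j < t then L.eval x else R.eval x

/-- The path of `x` through the tree: the sequence of internal nodes
(feature index, threshold) visited during evaluation. -/
noncomputable def path : DTree d c → (Fin d → ℝ) → List (Fin d × ℝ)
  | leaf _, _ => []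
  | node j t L R, x => (j, t) :: (if x j < t then L.path x else R.path x)

/-- The position (sequence of left/right choices) of the leaf reached by `x`. -/
noncomputable def leafPos : DTree d c → (Fin d → ℝ) → List Bool
  | leaf _, _ => []
  | node j t L R, x =>
      if x j < t then false :: L.leafPos x else true :: R.leafPos x

/-- The margin of `x̃` at the tree: the minimum of `|t - x̃ j|` over internal
nodes `(j, t)` on the path of `x̃`, and `+∞` for a single leaf. -/
noncomputable def margin : DTree d c → (Fin d → ℝ) → EReal
  | leaf _, _ => ⊤
  | node j t L R, x =>
      min (↑|t - x j|) (if x j < t then L.margin x else R.margin x)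

/-- The set of leaves of the tree, identified with root-to-leaf positions. -/
def leaves : DTree d c → Finset (List Bool)
  | leaf _ => {[]}
  | node _ _ L R => (L.leaves.image (false :: ·)) ∪ (R.leaves.image (true :: ·))

/-- The class label of the leaf at a given root-to-leaf position, if it exists. -/
def labelAt : DTree d c → List Bool → Option (Fin c)
  | leaf k, [] => some k
  | node _ _ L _, false :: p => L.labelAt p
  | node _ _ _ R, true :: p => R.labelAt p
  | _, _ => none

end DTree

/-! Moving `x̃` by at most `ε` in ℓ∞ moves each coordinate by less than its distance to every
threshold on the path of `x̃`, so `y` takes the same branch as `x̃` at every node of that path. -/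

lemma lt_iff_lt_of_abs_sub_lt_abs_sub {x y t : ℝ} (h : |y - x| < |t - x|) : y < t ↔ x < t := by
  cases abs_cases (y - x) <;> cases abs_cases (t - x) <;> constructor <;> intro <;> linarith

namespace DTree

variable {d c : ℕ}

theorem eval_eq_of_forall_mem_path {T : DTree d c} {x y : Fin d → ℝ}
    (h : ∀ p ∈ T.path x, y p.1 < p.2 ↔ x p.1 < p.2) : T.eval y = T.eval x := by
  induction T with
  | leaf k => rfl
  | node j t L R ihL ihR =>
    simp only [path, List.mem_cons, forall_eq_or_imp] at h
    obtain ⟨hroot, hsub⟩ := h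
    by_cases hx : x j < t
    · simp only [eval, hx, hroot.mpr hx, if_true]
      exact ihL (by simpa [hx] using hsub)
    · simp only [eval, hx, mt hroot.mp hx, if_false]
      exact ihR (by simpa [hx] using hsub)

theorem margin_le_of_mem_path {T : DTree d c} {x : Fin d → ℝ} {p : Fin d × ℝ}
    (hp : p ∈ T.path x) : T.margin x ≤ |p.2 - x p.1| := by
  induction T with
  | leaf k => simp [path] at hp
  | node j t L R ihL ihR =>
    simp only [path, List.mem_cons] at hp
    rcases hp with rfl | hp
    · exact min_le_left _ _
    · refine (min_le_right _ _).trans ?_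
      by_cases hx : x j < t
      · simpa [hx] using ihL (by simpa [hx] using hp)
      · simpa [hx] using ihR (by simpa [hx] using hp)

end DTree

theorem DTree.eval_const_on_ball_general {d c : ℕ} (T : DTree d c) (x' : Fin d → ℝ)
    (ε : ℝ) (hmargin : (ε : EReal) < T.margin x') :
    ∀ y : Fin d → ℝ, ‖y - x'‖ ≤ ε → T.eval y = T.eval x' := by
  intro y hy
  refine eval_eq_of_forall_mem_path fun p hp => lt_iff_lt_of_abs_sub_lt_abs_sub ?_
  have hcoord : |y p.1 - x' p.1| ≤ ε := (norm_le_pi_norm (y - x') p.1).trans hy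
  have hnode : (ε : EReal) < |p.2 - x' p.1| := hmargin.trans_le (margin_le_of_mem_path hp)
  exact hcoord.trans_lt (EReal.coe_lt_coe_iff.mp hnode)

/-- If `0 ≤ ε` is strictly smaller than the margin of `x'` at the tree `T`,
then `y ↦ eval T y` is constant on the closed ℓ∞-ball of radius `ε` centered at
`x'` (the sup norm on `Fin d → ℝ` is the ℓ∞ norm). -/
theorem DTree.eval_const_on_ball {d c : ℕ} (T : DTree d c) (x' : Fin d → ℝ)
    (ε : ℝ) (hε : 0 ≤ ε) (hmargin : (ε : EReal) < T.margin x') :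
    ∀ y : Fin d → ℝ, ‖y - x'‖ ≤ ε → T.eval y = T.eval x' :=
  DTree.eval_const_on_ball_general T x' ε hmargin
end

section
/- Let T be a binary decision tree over ℝ^d with classes {1,…,c}, let X and X̃ be finite subsets of ℝ^d, let ε ≥ 0, and let r : X → X̃ be a map with ‖x − r(x)‖_∞ ≤ ε for all x ∈ X. If for every x̃ ∈ X̃ the margin of x̃ at T is strictly greater than ε, then eval(T, x) = eval(T, r(x)) for every x ∈ X; that is, T predicts the same class for every point of X as for its representative in X̃. -/
open scoped Classical

/-! Every threshold on the path of `x'` lies farther than `ε` from `x'` in its coordinate, so a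
point `ε`-close to `x'` in the sup norm falls on the same side of each of them and follows the
same path down to the same leaf. -/

theorem lt_iff_lt_of_abs_sub_le_of_lt_abs_sub {α : Type*} [Field α] [LinearOrder α]
    [IsStrictOrderedRing α] {a b t ε : α} (hab : |a - b| ≤ ε) (hbt : ε < |t - b|) :
    a < t ↔ b < t := by
  rcases abs_le.mp hab with ⟨hab₁, hab₂⟩
  rcases lt_abs.mp hbt with hbt | hbt <;> constructor <;> intro h <;> linarith

namespace DTree

theorem eval_eq_of_norm_sub_le {d c : ℕ} {T : DTree d c} {x x' : Fin d → ℝ} {ε : ℝ}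
    (hclose : ‖x - x'‖ ≤ ε) (hmargin : (ε : EReal) < T.margin x') :
    T.eval x = T.eval x' := by
  induction T with
  | leaf _ => rfl
  | node j t L R ihL ihR =>
    rw [margin, lt_min_iff, EReal.coe_lt_coe_iff] at hmargin
    have hcoord : |x j - x' j| ≤ ε := (norm_le_pi_norm (x - x') j).trans hclose
    have hside : x j < t ↔ x' j < t :=
      lt_iff_lt_of_abs_sub_le_of_lt_abs_sub hcoord hmargin.1
    simp only [eval, hside]
    split_ifs at hmargin ⊢
    · exact ihL hmargin.2
    · exact ihR hmargin.2

end DTree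

theorem DTree.eval_eq_of_representative_general {d c : ℕ} (T : DTree d c)
    (X X' : Finset (Fin d → ℝ)) (ε : ℝ)
    (r : (Fin d → ℝ) → (Fin d → ℝ)) (hr : ∀ x ∈ X, r x ∈ X')
    (hclose : ∀ x ∈ X, ‖x - r x‖ ≤ ε)
    (hmargin : ∀ x' ∈ X', (ε : EReal) < T.margin x') :
    ∀ x ∈ X, T.eval x = T.eval (r x) :=
  fun x hx => eval_eq_of_norm_sub_le (hclose x hx) (hmargin (r x) (hr x hx))

/-- Let `X`, `X'` be finite subsets of `ℝ^d` and `r` a map sending each point of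
`X` into `X'` with `‖x − r x‖_∞ ≤ ε`. If the margin of every `x' ∈ X'` at the
tree `T` is strictly greater than `ε`, then `T` predicts the same class for
every point of `X` as for its representative. -/
theorem DTree.eval_eq_of_representative {d c : ℕ} (T : DTree d c)
    (X X' : Finset (Fin d → ℝ)) (ε : ℝ) (hε : 0 ≤ ε)
    (r : (Fin d → ℝ) → (Fin d → ℝ)) (hr : ∀ x ∈ X, r x ∈ X')
    (hclose : ∀ x ∈ X, ‖x - r x‖ ≤ ε)
    (hmargin : ∀ x' ∈ X', (ε : EReal) < T.margin x') :
    ∀ x ∈ X, T.eval x = T.eval (r x) :=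
  DTree.eval_eq_of_representative_general T X X' ε r hr hclose hmargin
end

section
/- (Theorem 1) Let T be a binary decision tree over ℝ^d with classes {1,…,c}. Let (X, λ_X) and (X̃, λ_X̃) be nonempty finite labeled datasets in ℝ^d with class labels in {1,…,c}, let γ be a positive natural number and ε ≥ 0, and suppose (X̃, λ_X̃) is a γ-balanced ε-representative dataset of (X, λ_X), witnessed by a map r : X → X̃ with ‖x − r(x)‖_∞ ≤ ε and λ_X(x) = λ_X̃(r(x)) for all x ∈ X and with every fiber of r of cardinality exactly γ. If ε is strictly smaller than the margin of x̃ at T for every x̃ ∈ X̃, then Acc(T, (X, λ_X)) = Acc(T, (X̃, λ_X̃)), where Acc(T, (X, λ_X)) = |{x ∈ X : eval(T, x) = λ_X(x)}| / |X| is the accuracy of T on (X, λ_X). -/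
open scoped Classical

lemma DTree.eval_eq_of_lt_margin {d c : ℕ} (T : DTree d c) (ε : ℝ)
    (x x' : Fin d → ℝ) (h : ∀ j, |x j - x' j| ≤ ε)
    (hm : (ε : EReal) < T.margin x') : T.eval x = T.eval x' := by
  induction T with
  | leaf k => rfl
  | node j t L R ihL ihR =>
    simp only [DTree.margin, lt_min_iff] at hm
    obtain ⟨h1, h2⟩ := hm
    have h1' : ε < |t - x' j| := by exact_mod_cast h1
    have hxj := abs_le.mp (h j)
    rcases lt_or_ge (x' j) t with hx' | hx'
    · have ht : ε < t - x' j := by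
        rwa [abs_of_pos (by linarith)] at h1'
      have hx : x j < t := by linarith [hxj.2]
      rw [if_pos hx'] at h2
      simp only [DTree.eval, if_pos hx, if_pos hx']
      exact ihL h2
    · have ht : ε < x' j - t := by
        rw [abs_of_nonpos (by linarith)] at h1'; linarith
      have hx : ¬ x j < t := by push_neg; linarith [hxj.1]
      rw [if_neg (not_lt.mpr hx')] at h2
      simp only [DTree.eval, if_neg hx, if_neg (not_lt.mpr hx')]
      exact ihR h2

/-- **Theorem 1.** Let `(X', labX')` be a γ-balanced ε-representative dataset of
the nonempty finite labeled dataset `(X, labX)`, witnessed by a representation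
map `r : X → X'` with `‖x − r x‖_∞ ≤ ε`, `labX x = labX' (r x)`, and all fibers
of cardinality exactly `γ > 0`. If `ε` is strictly smaller than the margin of
every `x' ∈ X'` at the binary decision tree `T`, then
`Acc(T, (X, labX)) = Acc(T, (X', labX'))`, where accuracy is the fraction of
correctly classified points. -/
theorem DTree.acc_eq_of_balanced_representative {d c : ℕ} (T : DTree d c)
    (X X' : Finset (Fin d → ℝ)) (hX : X.Nonempty) (hX' : X'.Nonempty)
    (labX labX' : (Fin d → ℝ) → Fin c)
    (γ : ℕ) (hγ : 0 < γ) (ε : ℝ) (hε : 0 ≤ ε)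
    (r : (Fin d → ℝ) → (Fin d → ℝ)) (hr : ∀ x ∈ X, r x ∈ X')
    (hclose : ∀ x ∈ X, ‖x - r x‖ ≤ ε)
    (hlab : ∀ x ∈ X, labX x = labX' (r x))
    (hfib : ∀ x' ∈ X', (X.filter (fun x => r x = x')).card = γ)
    (hmargin : ∀ x' ∈ X', (ε : EReal) < T.margin x') :
    ((X.filter (fun x => T.eval x = labX x)).card : ℝ) / (X.card : ℝ)
      = ((X'.filter (fun x => T.eval x = labX' x)).card : ℝ) / (X'.card : ℝ) := by
  have key : ∀ S' : Finset (Fin d → ℝ), S' ⊆ X' →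
      (X.filter (fun x => r x ∈ S')).card = γ * S'.card := by
    intro S' hS'
    have hU : X.filter (fun x => r x ∈ S')
        = S'.biUnion (fun x' => X.filter (fun x => r x = x')) := by
      ext x
      simp only [Finset.mem_filter, Finset.mem_biUnion]
      constructor
      · rintro ⟨hx, hrx⟩; exact ⟨r x, hrx, hx, rfl⟩
      · rintro ⟨x', hx', hx, rfl⟩; exact ⟨hx, hx'⟩
    rw [hU, Finset.card_biUnion]
    · rw [Finset.sum_congr rfl (fun x' hx' => hfib x' (hS' hx'))]
      simp [mul_comm]
    · intro a ha b hb hab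
      simp only [Finset.disjoint_left, Finset.mem_filter]
      rintro x ⟨-, rfl⟩ ⟨-, h2⟩
      exact hab h2
  have hXcard : X.card = γ * X'.card := by
    have := key X' (le_refl X')
    rwa [Finset.filter_true_of_mem hr] at this
  have hfilter : X.filter (fun x => T.eval x = labX x)
      = X.filter (fun x => r x ∈ X'.filter (fun x' => T.eval x' = labX' x')) := by
    apply Finset.filter_congr
    intro x hx
    have hj : ∀ j, |x j - r x j| ≤ ε := by
      intro j
      calc |x j - r x j| = ‖(x - r x) j‖ := by simp [Real.norm_eq_abs]
        _ ≤ ‖x - r x‖ := norm_le_pi_norm _ j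
        _ ≤ ε := hclose x hx
    have heval : T.eval x = T.eval (r x) :=
      T.eval_eq_of_lt_margin ε x (r x) hj (hmargin (r x) (hr x hx))
    simp only [Finset.mem_filter, heval, hlab x hx]
    exact ⟨fun h => ⟨hr x hx, h⟩, fun h => h.2⟩
  have hcorr : (X.filter (fun x => T.eval x = labX x)).card
      = γ * (X'.filter (fun x' => T.eval x' = labX' x')).card := by
    rw [hfilter]; exact key _ (Finset.filter_subset _ _)
  rw [hcorr, hXcard]
  push_cast
  rw [mul_div_mul_left _ _ (by exact_mod_cast hγ.ne' : (γ : ℝ) ≠ 0)]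
end

section
/- Let T be a binary decision tree over ℝ^d with classes {1,…,c}. Let (X, λ_X) and (X̃, λ_X̃) be nonempty finite labeled datasets in ℝ^d with class labels in {1,…,c}, let γ be a positive natural number and ε ≥ 0, and let r : X → X̃ be a map such that ‖x − r(x)‖_∞ ≤ ε and λ_X(x) = λ_X̃(r(x)) for all x ∈ X and every fiber of r has cardinality exactly γ. Assume ε is strictly smaller than the margin of x̃ at T for every x̃ ∈ X̃. Then for every leaf ℓ of T and every class k ∈ {1,…,c}: p_ℓ = p̃_ℓ, where p_ℓ = N_ℓ/|X| and p̃_ℓ = Ñ_ℓ/|X̃| are the fractions of points of X and of X̃ whose evaluation paths end at ℓ; and whenever N_ℓ > 0, also p_{ℓ,k} = p̃_{ℓ,k}, where p_{ℓ,k} = N_{ℓ,k}/N_ℓ and p̃_{ℓ,k} = Ñ_{ℓ,k}/Ñ_ℓ are the within-leaf fractions of points with label k. -/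
open scoped Classical

lemma DTree.leafPos_eq_of_close {d c : ℕ} (T : DTree d c) (x x' : Fin d → ℝ)
    (ε : ℝ) (hclose : ∀ j, |x j - x' j| ≤ ε) (hm : (ε : EReal) < T.margin x') :
    T.leafPos x = T.leafPos x' := by
  induction T with
  | leaf k => rfl
  | node j t L R hL hR =>
    simp only [DTree.margin] at hm
    rw [lt_min_iff] at hm
    obtain ⟨h1, h2⟩ := hm
    rw [EReal.coe_lt_coe_iff] at h1
    have hj := abs_le.mp (hclose j)
    by_cases h : x' j < t
    · have hx : x j < t := by
        have ha : |t - x' j| = t - x' j := abs_of_pos (by linarith)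
        rw [ha] at h1
        linarith [hj.2]
      rw [if_pos h] at h2
      simp only [DTree.leafPos, if_pos h, if_pos hx]
      rw [hL h2]
    · have hx : ¬ x j < t := by
        push_neg at h ⊢
        have ha : |t - x' j| = x' j - t := by
          rw [abs_sub_comm]; exact abs_of_nonneg (by linarith)
        rw [ha] at h1
        linarith [hj.1]
      rw [if_neg h] at h2
      simp only [DTree.leafPos, if_neg h, if_neg hx]
      rw [hR h2]

lemma card_filter_comp_aux {α : Type*} (X X' : Finset α) (r : α → α) (γ : ℕ)
    (hr : ∀ x ∈ X, r x ∈ X')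
    (hfib : ∀ x' ∈ X', (X.filter (fun x => r x = x')).card = γ)
    (P : α → Prop) [DecidablePred P] :
    (X.filter (fun x => P (r x))).card = γ * (X'.filter P).card := by
  have H : ∀ x ∈ X.filter (fun x => P (r x)), r x ∈ X'.filter P := by
    intro x hx
    rw [Finset.mem_filter] at hx ⊢
    exact ⟨hr x hx.1, hx.2⟩
  rw [Finset.card_eq_sum_card_fiberwise H]
  rw [Finset.sum_congr rfl (fun b hb => ?_), Finset.sum_const, smul_eq_mul, Nat.mul_comm]
  rw [← hfib b (Finset.mem_filter.mp hb).1]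
  congr 1
  ext a
  simp only [Finset.mem_filter]
  constructor
  · rintro ⟨⟨ha, _⟩, h2⟩; exact ⟨ha, h2⟩
  · rintro ⟨ha, h2⟩
    exact ⟨⟨ha, h2 ▸ (Finset.mem_filter.mp hb).2⟩, h2⟩

/-- Under the hypotheses of Theorem 1 (γ-balanced ε-representation map `r`,
label-preserving and ε-close, with `ε` below the margin of every point of
`X'` at the tree `T`), for every leaf `ℓ` of `T` and class `k`: the fractions
`pℓ = Nℓ/|X|` and `p'ℓ = N'ℓ/|X'|` of points whose evaluation path ends at `ℓ`
coincide, and whenever `Nℓ > 0` the within-leaf label fractions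
`pℓk = Nℓk/Nℓ` and `p'ℓk = N'ℓk/N'ℓ` coincide as well. -/
theorem DTree.leaf_fractions_eq_of_balanced_representative {d c : ℕ}
    (T : DTree d c)
    (X X' : Finset (Fin d → ℝ)) (hX : X.Nonempty) (hX' : X'.Nonempty)
    (labX labX' : (Fin d → ℝ) → Fin c)
    (γ : ℕ) (hγ : 0 < γ) (ε : ℝ) (hε : 0 ≤ ε)
    (r : (Fin d → ℝ) → (Fin d → ℝ)) (hr : ∀ x ∈ X, r x ∈ X')
    (hclose : ∀ x ∈ X, ‖x - r x‖ ≤ ε)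
    (hlab : ∀ x ∈ X, labX x = labX' (r x))
    (hfib : ∀ x' ∈ X', (X.filter (fun x => r x = x')).card = γ)
    (hmargin : ∀ x' ∈ X', (ε : EReal) < T.margin x') :
    ∀ ℓ ∈ T.leaves, ∀ k : Fin c,
      (((X.filter (fun x => T.leafPos x = ℓ)).card : ℝ) / (X.card : ℝ)
          = ((X'.filter (fun x => T.leafPos x = ℓ)).card : ℝ) / (X'.card : ℝ)) ∧
        (0 < (X.filter (fun x => T.leafPos x = ℓ)).card →
          ((X.filter (fun x => T.leafPos x = ℓ ∧ labX x = k)).card : ℝ) /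
              ((X.filter (fun x => T.leafPos x = ℓ)).card : ℝ)
            = ((X'.filter (fun x => T.leafPos x = ℓ ∧ labX' x = k)).card : ℝ) /
              ((X'.filter (fun x => T.leafPos x = ℓ)).card : ℝ)) := by
  intro ℓ hℓ k
  have key : ∀ x ∈ X, T.leafPos x = T.leafPos (r x) := by
    intro x hx
    refine DTree.leafPos_eq_of_close T x (r x) ε (fun j => ?_) (hmargin (r x) (hr x hx))
    have h := norm_le_pi_norm (x - r x) j
    simp only [Pi.sub_apply, Real.norm_eq_abs] at h
    exact h.trans (hclose x hx)
  have hγR : (γ : ℝ) ≠ 0 := Nat.cast_ne_zero.mpr hγ.ne'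
  have hfib' : ∀ x' ∈ X',
      (@Finset.filter _ (fun x => r x = x')
        (fun a => Classical.propDecidable (r a = x')) X).card = γ := by
    intro x' hx'
    rw [Finset.filter_congr_decidable]
    exact hfib x' hx'
  have htot : X.card = γ * X'.card := by
    have := card_filter_comp_aux X X' r γ hr hfib' (fun _ => True)
    simpa using this
  have h1 : (X.filter (fun x => T.leafPos x = ℓ)).card
      = γ * (X'.filter (fun x => T.leafPos x = ℓ)).card := by
    rw [← card_filter_comp_aux X X' r γ hr hfib' (fun x' => T.leafPos x' = ℓ)]
    congr 1
    exact Finset.filter_congr (fun x hx => by rw [key x hx])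
  have h2 : (X.filter (fun x => T.leafPos x = ℓ ∧ labX x = k)).card
      = γ * (X'.filter (fun x => T.leafPos x = ℓ ∧ labX' x = k)).card := by
    rw [← card_filter_comp_aux X X' r γ hr hfib'
      (fun x' => T.leafPos x' = ℓ ∧ labX' x' = k)]
    congr 1
    exact Finset.filter_congr (fun x hx => by rw [key x hx, hlab x hx])
  constructor
  · rw [h1, htot]
    push_cast
    rw [mul_div_mul_left _ _ hγR]
  · intro _
    rw [h1, h2]
    push_cast
    rw [mul_div_mul_left _ _ hγR]
end
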